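/- (Interpolation) Let 2 < s < 5/2, let κ be an admissible weight with associated φ (φ ∼ κ), and for Schwartz f on ℝ² set A = ‖|D|² φ(|D|) f‖²_{L²} and B = ‖|D|^{5/2} φ(|D|) f‖²_{L²}. Then there is C (independent of f) with ‖f‖_{Ḣ^s} ≤ C φ(B/A)^{−1} A^{5/2−s} B^{s−2}. -/

import Mathlib

open MeasureTheory FourierTransform

/-- Square of the homogeneous Sobolev norm `‖g‖²_{Ḣ^s}` on `ℝ²`. -/
noncomputable def HsqNorm (s : ℝ) (g : EuclideanSpace ℝ (Fin 2) → ℂ) : ℝ :=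
  ∫ ξ : EuclideanSpace ℝ (Fin 2), ‖ξ‖ ^ (2 * s) * ‖𝓕 g ξ‖ ^ 2

/-- The weight `φ` associated to an admissible weight `κ`. -/
noncomputable def phiOf (κ : ℝ → ℝ) (lam : ℝ) : ℝ :=
  4 * Real.pi * ∫ r in Set.Ioi (0 : ℝ), (1 - Real.cos r) * r ^ (-(5 / 2) : ℝ) * κ (lam / r)

set_option linter.unusedSectionVars false
set_option linter.unusedVariables false

open Set Real



noncomputable def Dlog (r : ℝ) : ℝ := 1 + max 0 (-Real.log r) / Real.log 4

noncomputable def baseG (r : ℝ) : ℝ := (1 - Real.cos r) * r ^ (-(5 / 2) : ℝ) * Dlog r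

lemma log_four_pos : 0 < Real.log 4 := Real.log_pos (by norm_num)

lemma one_lt_log_four : 1 < Real.log 4 := by
  rw [show (4:ℝ) = 2^(2:ℕ) by norm_num, Real.log_pow]
  have := Real.log_two_gt_d9
  push_cast; nlinarith

lemma one_le_Dlog (r : ℝ) : 1 ≤ Dlog r := by
  have h1 := log_four_pos
  have h0 : 0 ≤ max 0 (-Real.log r) := le_max_left _ _
  have h2 : 0 ≤ max 0 (-Real.log r) / Real.log 4 := by positivity
  simp only [Dlog]; linarith

lemma Dlog_nonneg (r : ℝ) : 0 ≤ Dlog r := le_trans zero_le_one (one_le_Dlog r)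

lemma measurable_Dlog : Measurable Dlog := by
  unfold Dlog
  exact (measurable_const.max Real.measurable_log.neg).div_const _ |>.const_add _

lemma one_sub_cos_nonneg (r : ℝ) : 0 ≤ 1 - Real.cos r := by
  nlinarith [Real.cos_le_one r]

lemma baseG_nonneg {r : ℝ} (hr : 0 < r) : 0 ≤ baseG r :=
  mul_nonneg (mul_nonneg (one_sub_cos_nonneg r) (Real.rpow_pos_of_pos hr _).le)
    (Dlog_nonneg r)

lemma measurable_baseG : Measurable baseG := by
  unfold baseG
  have h1 : Measurable (fun r : ℝ => r ^ (-(5/2) : ℝ)) := by measurability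
  exact ((measurable_const.sub Real.measurable_cos).mul h1).mul measurable_Dlog

lemma Dlog_eq_one {r : ℝ} (hr : 1 ≤ r) : Dlog r = 1 := by
  have : -Real.log r ≤ 0 := neg_nonpos.mpr (Real.log_nonneg hr)
  simp [Dlog, max_eq_left this]

lemma Dlog_le {r : ℝ} (h0 : 0 < r) (h1 : r ≤ 1) : Dlog r ≤ 1 + 4 * r ^ (-(1/4 : ℝ)) := by
  have hl4 := log_four_pos
  have h14 := one_lt_log_four
  have hlog : -Real.log r = Real.log (1/r) := by
    rw [Real.log_div one_ne_zero h0.ne']; simp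
  have hinv : (1/r) ^ ((1:ℝ)/4) = r ^ (-(1/4 : ℝ)) := by
    rw [one_div, ← Real.rpow_neg_one, ← Real.rpow_mul h0.le]; norm_num
  have hle : Real.log (1/r) ≤ 4 * r ^ (-(1/4:ℝ)) := by
    have := Real.log_le_rpow_div (x := 1/r) (ε := 1/4) (by positivity) (by norm_num)
    rw [hinv] at this
    linarith
  have hmax : max 0 (-Real.log r) ≤ 4 * r ^ (-(1/4:ℝ)) := by
    rw [hlog]
    exact max_le (by positivity) hle
  have : max 0 (-Real.log r) / Real.log 4 ≤ 4 * r ^ (-(1/4:ℝ)) := by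
    rw [div_le_iff₀ hl4]
    have h4 : (0:ℝ) ≤ 4 * r ^ (-(1/4:ℝ)) := by positivity
    nlinarith
  simp only [Dlog]; linarith

lemma baseG_integrable : IntegrableOn baseG (Ioi (0:ℝ)) := by
  have hmeas := measurable_baseG.aestronglyMeasurable (μ := volume.restrict (Ioi (0:ℝ)))
  rw [show Ioi (0:ℝ) = Ioc 0 1 ∪ Ioi 1 by
    rw [Set.Ioc_union_Ioi_eq_Ioi]; norm_num]
  apply IntegrableOn.union
  · -- on Ioc 0 1, dominate by 3 * r^(-3/4)
    have hint : IntegrableOn (fun r : ℝ => 3 * r ^ (-(3/4) : ℝ)) (Ioc (0:ℝ) 1) := by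
      exact ((intervalIntegral.intervalIntegrable_rpow' (a := 0) (b := 1)
        (r := -(3/4)) (by norm_num)).1).const_mul 3
    apply Integrable.mono' hint (measurable_baseG.aestronglyMeasurable)
    filter_upwards [ae_restrict_mem measurableSet_Ioc] with r hr
    obtain ⟨h0, h1⟩ := hr
    rw [Real.norm_eq_abs, abs_of_nonneg (baseG_nonneg h0)]
    have hcos : 1 - Real.cos r ≤ r^2 / 2 := by
      have := Real.one_sub_sq_div_two_le_cos (x := r); linarith
    have hD := Dlog_le h0 h1
    have hr52 : (0:ℝ) < r ^ (-(5/2) : ℝ) := Real.rpow_pos_of_pos h0 _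
    have key : baseG r ≤ (r^2/2) * r ^ (-(5/2) : ℝ) * (1 + 4 * r ^ (-(1/4:ℝ))) := by
      unfold baseG
      have hD0 := Dlog_nonneg r
      apply mul_le_mul
      · exact mul_le_mul_of_nonneg_right hcos hr52.le
      · exact hD
      · exact hD0
      · positivity
    refine key.trans ?_
    have e1 : (r^2/2) * r ^ (-(5/2):ℝ) = (1/2) * r ^ (-(1/2):ℝ) := by
      rw [← Real.rpow_natCast r 2]
      rw [div_mul_eq_mul_div, ← Real.rpow_add h0]
      norm_num
      rw [mul_comm, ← div_eq_mul_one_div]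
    have e2 : r ^ (-(1/2):ℝ) * r ^ (-(1/4):ℝ) = r ^ (-(3/4):ℝ) := by
      rw [← Real.rpow_add h0]; norm_num
    have hle1 : r ^ (-(1/2):ℝ) ≤ r ^ (-(3/4):ℝ) := by
      apply Real.rpow_le_rpow_of_exponent_ge h0 h1; norm_num
    calc (r^2/2) * r ^ (-(5/2):ℝ) * (1 + 4 * r ^ (-(1/4:ℝ)))
        = (1/2) * r ^ (-(1/2):ℝ) + 2 * (r ^ (-(1/2):ℝ) * r ^ (-(1/4):ℝ)) := by
          rw [e1]; ring
      _ = (1/2) * r ^ (-(1/2):ℝ) + 2 * r ^ (-(3/4):ℝ) := by rw [e2]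
      _ ≤ (1/2) * r ^ (-(3/4):ℝ) + 2 * r ^ (-(3/4):ℝ) := by linarith
      _ ≤ 3 * r ^ (-(3/4):ℝ) := by
          have : (0:ℝ) ≤ r ^ (-(3/4):ℝ) := by positivity
          linarith
  · -- on Ioi 1, dominate by 2 * r^(-5/2)
    have hint : IntegrableOn (fun r : ℝ => 2 * r ^ (-(5/2) : ℝ)) (Ioi (1:ℝ)) :=
      (integrableOn_Ioi_rpow_of_lt (by norm_num) (by norm_num)).const_mul 2
    apply Integrable.mono' hint (measurable_baseG.aestronglyMeasurable)
    filter_upwards [ae_restrict_mem measurableSet_Ioi] with r hr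
    have h0 : (0:ℝ) < r := lt_trans zero_lt_one hr
    rw [Real.norm_eq_abs, abs_of_nonneg (baseG_nonneg h0)]
    unfold baseG
    rw [Dlog_eq_one hr.le, mul_one]
    have hr52 : (0:ℝ) < r ^ (-(5/2) : ℝ) := Real.rpow_pos_of_pos h0 _
    have : 1 - Real.cos r ≤ 2 := by nlinarith [Real.neg_one_le_cos r]
    nlinarith

set_option maxHeartbeats 1000000 in
lemma scalar_log {α : ℝ} (hα : 0 < α) :
    ∃ C : ℝ, 1 ≤ C ∧ ∀ x l : ℝ, 0 ≤ x → x ≤ l →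
      x ^ α * Real.log (4 + l) ^ 2 ≤ C * l ^ α * Real.log (4 + x) ^ 2 := by
  have hl4 := one_lt_log_four
  refine ⟨max ((Real.log 5 / Real.log 4)^2) (max 4 (2 * Real.log 5 ^ 2 + 32 / α^2)),
    le_trans (by norm_num) (le_max_of_le_right (le_max_left _ _)), ?_⟩
  set C := max ((Real.log 5 / Real.log 4)^2) (max 4 (2 * Real.log 5 ^ 2 + 32 / α^2)) with hC
  intro x l hx hxl
  have hl : 0 ≤ l := hx.trans hxl
  have hlog4x : Real.log 4 ≤ Real.log (4 + x) := Real.log_le_log (by norm_num) (by linarith)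
  have hlogx_pos : (0:ℝ) < Real.log (4 + x) := by linarith
  have hlogl_pos : (0:ℝ) < Real.log (4 + l) := by
    have : Real.log 4 ≤ Real.log (4 + l) := Real.log_le_log (by norm_num) (by linarith)
    linarith
  have hxα : x ^ α ≤ l ^ α := Real.rpow_le_rpow hx hxl hα.le
  have hxα0 : 0 ≤ x ^ α := Real.rpow_nonneg hx α
  have hlα0 : 0 ≤ l ^ α := Real.rpow_nonneg hl α
  rcases le_or_gt l 1 with h1 | h1
  · -- l ≤ 1 : log(4+l) ≤ log 5 ≤ (log5/log4) log(4+x)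
    have h5 : Real.log (4 + l) ≤ Real.log 5 := Real.log_le_log (by linarith) (by linarith)
    have h5' : Real.log (4 + l) ≤ (Real.log 5 / Real.log 4) * Real.log (4 + x) := by
      have h45 : Real.log 4 ≤ Real.log 5 := Real.log_le_log (by norm_num) (by norm_num)
      calc Real.log (4 + l) ≤ Real.log 5 := h5
        _ = (Real.log 5 / Real.log 4) * Real.log 4 := by field_simp
        _ ≤ (Real.log 5 / Real.log 4) * Real.log (4 + x) := by
            apply mul_le_mul_of_nonneg_left hlog4x (by positivity)
    have hCge : (Real.log 5 / Real.log 4)^2 ≤ C := le_max_left _ _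
    calc x ^ α * Real.log (4 + l) ^ 2
        ≤ l ^ α * (((Real.log 5 / Real.log 4) * Real.log (4 + x)) ^ 2) := by
          apply mul_le_mul hxα _ (by positivity) hlα0
          apply pow_le_pow_left₀ hlogl_pos.le h5' 2
      _ = (Real.log 5 / Real.log 4)^2 * l ^ α * Real.log (4 + x) ^ 2 := by ring
      _ ≤ C * l ^ α * Real.log (4 + x) ^ 2 := by
          apply mul_le_mul_of_nonneg_right (mul_le_mul_of_nonneg_right hCge hlα0)
          positivity
  · rcases le_or_gt l (x^2) with h2 | h2
    · -- x² ≥ l : log(4+l) ≤ 2 log(4+x)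
      have hll : Real.log (4 + l) ≤ 2 * Real.log (4 + x) := by
        calc Real.log (4 + l) ≤ Real.log (4 + x^2) := Real.log_le_log (by linarith) (by linarith)
          _ ≤ Real.log ((4 + x)^2) := Real.log_le_log (by positivity) (by nlinarith)
          _ = 2 * Real.log (4 + x) := by
              rw [Real.log_pow]; norm_num
      have hCge : (4:ℝ) ≤ C := le_trans (le_max_left _ _) (le_max_right _ _)
      calc x ^ α * Real.log (4 + l) ^ 2
          ≤ l ^ α * (2 * Real.log (4 + x)) ^ 2 := by
            apply mul_le_mul hxα (pow_le_pow_left₀ hlogl_pos.le hll 2) (by positivity) hlα0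
        _ = 4 * l ^ α * Real.log (4 + x) ^ 2 := by ring
        _ ≤ C * l ^ α * Real.log (4 + x) ^ 2 := by
            apply mul_le_mul_of_nonneg_right (mul_le_mul_of_nonneg_right hCge hlα0)
            positivity
    · -- 1 < l, x² < l : x^α ≤ l^{α/2}, log(4+l) ≤ log5 + (4/α) l^{α/4}
      have hxsq : x ≤ l ^ ((1:ℝ)/2) := by
        have : x = (x^2) ^ ((1:ℝ)/2) := by
          rw [← Real.rpow_natCast x 2, ← Real.rpow_mul hx]
          norm_num
        rw [this]
        exact Real.rpow_le_rpow (by positivity) h2.le (by norm_num)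
      have hxa : x ^ α ≤ l ^ (α/2) := by
        calc x ^ α ≤ (l ^ ((1:ℝ)/2)) ^ α := Real.rpow_le_rpow hx hxsq hα.le
          _ = l ^ (α/2) := by rw [← Real.rpow_mul hl, show (1:ℝ)/2*α = α/2 by ring]
      have hlog_l : Real.log (4 + l) ≤ Real.log 5 + (4/α) * l ^ (α/4) := by
        have h5l : (4 + l) ≤ 5 * l := by nlinarith
        calc Real.log (4 + l) ≤ Real.log (5 * l) := Real.log_le_log (by linarith) h5l
          _ = Real.log 5 + Real.log l := Real.log_mul (by norm_num) (by linarith)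
          _ ≤ Real.log 5 + (4/α) * l ^ (α/4) := by
              have := Real.log_le_rpow_div (x := l) (ε := α/4) (by linarith) (by positivity)
              have heq : l ^ (α/4) / (α/4) = (4/α) * l ^ (α/4) := by
                field_simp
              rw [heq] at this
              linarith
      have hl14 : (1:ℝ) ≤ l ^ (α/4) := Real.one_le_rpow h1.le (by positivity)
      have hl12 : (1:ℝ) ≤ l ^ (α/2) := Real.one_le_rpow h1.le (by positivity)
      have hsq : Real.log (4 + l) ^ 2 ≤ (2 * Real.log 5 ^2 + 32/α^2) * l ^ (α/2) := by
        have h50 : (0:ℝ) ≤ Real.log 5 := Real.log_nonneg (by norm_num)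
        have hla40 : (0:ℝ) ≤ l ^ (α/4) := by positivity
        have e1 : (l ^ (α/4))^2 = l ^ (α/2) := by
          rw [← Real.rpow_natCast (l ^ (α/4)) 2, ← Real.rpow_mul hl,
            show α/4*(2:ℕ) = α/2 by push_cast; ring]
        have h2ab : Real.log (4+l)^2 ≤ 2 * Real.log 5^2 + 2 * ((4/α) * l ^ (α/4))^2 := by
          have hb0 : (0:ℝ) ≤ (4/α) * l ^ (α/4) := by positivity
          nlinarith [hlog_l, hlogl_pos, sq_nonneg (Real.log 5 - (4/α) * l ^ (α/4)),
            sq_nonneg (Real.log 5 + (4/α) * l ^ (α/4))]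
        have e2 : 2 * ((4/α) * l ^ (α/4))^2 = 32/α^2 * l ^ (α/2) := by
          rw [mul_pow, e1]; field_simp; ring
        calc Real.log (4+l)^2 ≤ 2 * Real.log 5^2 + 32/α^2 * l ^ (α/2) := by
              rw [← e2]; exact h2ab
          _ ≤ (2 * Real.log 5 ^2 + 32/α^2) * l ^ (α/2) := by nlinarith
      have hCge : (2 * Real.log 5 ^ 2 + 32 / α^2) ≤ C :=
        le_trans (le_max_right _ _) (le_max_right _ _)
      have e3 : l ^ (α/2) * l ^ (α/2) = l ^ α := by
        rw [← Real.rpow_add (by linarith : (0:ℝ) < l)]; norm_num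
      have hK0 : (0:ℝ) ≤ 2 * Real.log 5 ^ 2 + 32 / α^2 := by positivity
      calc x ^ α * Real.log (4 + l) ^ 2
          ≤ l ^ (α/2) * ((2 * Real.log 5 ^2 + 32/α^2) * l ^ (α/2)) := by
            apply mul_le_mul hxa hsq (by positivity) (by positivity)
        _ = (2 * Real.log 5 ^2 + 32/α^2) * l ^ α := by rw [← e3]; ring
        _ ≤ C * l ^ α := mul_le_mul_of_nonneg_right hCge hlα0
        _ ≤ C * l ^ α * Real.log (4 + x) ^ 2 := by
            have hC0 : (0:ℝ) ≤ C := le_trans hK0 hCge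
            have h1x : (1:ℝ) ≤ Real.log (4+x)^2 := by nlinarith
            exact le_mul_of_one_le_right (mul_nonneg hC0 hlα0) h1x

section Kappa

variable {κ : ℝ → ℝ} {c₀ : ℝ}
  (hκ1 : ∀ r : ℝ, 0 ≤ r → 1 ≤ κ r)
  (hmono : ∀ r u : ℝ, 0 ≤ r → r ≤ u → κ r ≤ κ u)
  (hdbl : ∀ r : ℝ, 0 ≤ r → κ (2 * r) ≤ c₀ * κ r)
  (hlog : ∀ r u : ℝ, 0 ≤ r → r ≤ u →
      κ u / Real.log (4 + u) ≤ κ r / Real.log (4 + r))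

include hκ1 hdbl in
lemma c0_ge_one : 1 ≤ c₀ := by
  have h1 := hκ1 0 le_rfl
  have h2 := hdbl 0 le_rfl
  rw [mul_zero] at h2
  nlinarith

include hκ1 hmono in
lemma kappa_measurable : Measurable (fun t : ℝ => κ (max t 0)) := by
  apply Monotone.measurable
  intro a b hab
  exact hmono _ _ (le_max_right _ _) (max_le_max hab le_rfl)

include hlog hκ1 in
lemma klog {x l : ℝ} (hx : 0 ≤ x) (hxl : x ≤ l) :
    κ l ≤ κ x * (Real.log (4 + l) / Real.log (4 + x)) := by
  have hlx : (0:ℝ) < Real.log (4 + x) := Real.log_pos (by linarith)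
  have hll : (0:ℝ) < Real.log (4 + l) := Real.log_pos (by linarith)
  have h := hlog x l hx hxl
  rw [div_le_div_iff₀ hll hlx] at h
  rw [show κ x * (Real.log (4 + l) / Real.log (4 + x)) =
      κ x * Real.log (4 + l) / Real.log (4 + x) by ring, le_div_iff₀ hlx]
  linarith
include hκ1 hmono hlog in
lemma kdiv_le {l r : ℝ} (hl : 0 ≤ l) (hr : 0 < r) :
    κ (l / r) ≤ κ l * Dlog r := by
  have hk0 : (0:ℝ) ≤ κ l := le_trans zero_le_one (hκ1 l hl)
  rcases le_or_gt 1 r with h1 | h1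
  · have : l / r ≤ l := by
      rw [div_le_iff₀ hr]; nlinarith
    calc κ (l / r) ≤ κ l := hmono _ _ (by positivity) this
      _ ≤ κ l * Dlog r := le_mul_of_one_le_right hk0 (one_le_Dlog r)
  · have hlr : l ≤ l / r := by
      rw [le_div_iff₀ hr]; nlinarith
    have h2 := klog hκ1 hlog hl hlr
    have hlogr : Real.log (4 + l / r) ≤ Real.log (4 + l) + (-Real.log r) := by
      have hstep : (4 + l / r) ≤ (4 + l) / r := by
        have he : (4 + l/r) * r = 4*r + l := by field_simp
        rw [le_div_iff₀ hr, he]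
        nlinarith
      calc Real.log (4 + l / r) ≤ Real.log ((4 + l) / r) :=
            Real.log_le_log (by positivity) hstep
        _ = Real.log (4 + l) + (-Real.log r) := by
            rw [Real.log_div (by positivity) hr.ne']; ring
    have hlx : (0:ℝ) < Real.log (4 + l) := Real.log_pos (by linarith)
    have hnlr : 0 < -Real.log r := by
      rw [neg_pos]
      exact Real.log_neg hr h1
    have : κ l * (Real.log (4 + l / r) / Real.log (4 + l)) ≤
        κ l * (1 + (-Real.log r) / Real.log 4) := by
      apply mul_le_mul_of_nonneg_left _ hk0
      rw [div_le_iff₀ hlx]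
      have h4 : Real.log 4 ≤ Real.log (4 + l) :=
        Real.log_le_log (by norm_num) (by linarith)
      have hl4 := log_four_pos
      have : (-Real.log r) / Real.log 4 * Real.log (4 + l) ≥ -Real.log r := by
        rw [ge_iff_le, div_mul_eq_mul_div, le_div_iff₀ hl4]
        nlinarith
      nlinarith
    have hDeq : κ l * (1 + (-Real.log r) / Real.log 4) = κ l * Dlog r := by
      rw [Dlog, max_eq_right hnlr.le]
    have hmid : κ l * (Real.log (4 + l / r) / Real.log (4 + l)) ≥ κ (l/r) → True := fun _ => trivial
    calc κ (l / r) ≤ κ l * (Real.log (4 + l / r) / Real.log (4 + l)) := h2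
      _ ≤ κ l * (1 + (-Real.log r) / Real.log 4) := this
      _ = κ l * Dlog r := hDeq


include hκ1 hmono hlog in
lemma hInt {l : ℝ} (hl : 0 ≤ l) :
    IntegrableOn (fun r => (1 - Real.cos r) * r ^ (-(5 / 2) : ℝ) * κ (l / r))
      (Ioi (0:ℝ)) := by
  have hk0 : (0:ℝ) ≤ κ l := le_trans zero_le_one (hκ1 l hl)
  have hmeas : Measurable (fun r : ℝ => (1 - Real.cos r) * r ^ (-(5 / 2) : ℝ) *
      κ (max (l / r) 0)) := by
    have h1 : Measurable (fun r : ℝ => r ^ (-(5/2) : ℝ)) := by measurability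
    exact ((measurable_const.sub Real.measurable_cos).mul h1).mul
      ((kappa_measurable hκ1 hmono).comp (measurable_const.div measurable_id))
  have hcongr : ∀ r ∈ Ioi (0:ℝ),
      (1 - Real.cos r) * r ^ (-(5 / 2) : ℝ) * κ (max (l / r) 0) =
      (1 - Real.cos r) * r ^ (-(5 / 2) : ℝ) * κ (l / r) := by
    intro r hr
    rw [max_eq_left (div_nonneg hl (le_of_lt hr))]
  apply IntegrableOn.congr_fun _ hcongr measurableSet_Ioi
  apply Integrable.mono' (baseG_integrable.const_mul (κ l))
    (hmeas.aestronglyMeasurable)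
  filter_upwards [ae_restrict_mem measurableSet_Ioi] with r hr
  have hr0 : (0:ℝ) < r := hr
  have hmax : max (l / r) 0 = l / r := max_eq_left (div_nonneg hl hr0.le)
  rw [hmax, Real.norm_eq_abs]
  have hκr : (0:ℝ) ≤ κ (l / r) := le_trans zero_le_one (hκ1 _ (div_nonneg hl hr0.le))
  have hb : (0:ℝ) ≤ (1 - Real.cos r) * r ^ (-(5/2) : ℝ) :=
    mul_nonneg (one_sub_cos_nonneg r) (Real.rpow_pos_of_pos hr0 _).le
  rw [abs_of_nonneg (mul_nonneg hb hκr)]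
  calc (1 - Real.cos r) * r ^ (-(5/2):ℝ) * κ (l / r)
      ≤ (1 - Real.cos r) * r ^ (-(5/2):ℝ) * (κ l * Dlog r) :=
        mul_le_mul_of_nonneg_left (kdiv_le hκ1 hmono hlog hl hr0) hb
    _ = κ l * baseG r := by rw [baseG]; ring

include hκ1 hmono hlog in
lemma phi_le {l : ℝ} (hl : 0 ≤ l) :
    phiOf κ l ≤ (4 * Real.pi * ∫ r in Ioi (0:ℝ), baseG r) * κ l := by
  have hk0 : (0:ℝ) ≤ κ l := le_trans zero_le_one (hκ1 l hl)
  rw [phiOf, show (4 * Real.pi * ∫ r in Ioi (0:ℝ), baseG r) * κ l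
    = 4 * Real.pi * ∫ r in Ioi (0:ℝ), κ l * baseG r by
      rw [integral_const_mul]; ring]
  have hpi : (0:ℝ) ≤ 4 * Real.pi := by positivity
  apply mul_le_mul_of_nonneg_left _ hpi
  apply setIntegral_mono_on (hInt hκ1 hmono hlog hl)
    (baseG_integrable.const_mul (κ l)) measurableSet_Ioi
  intro r hr
  have hr0 : (0:ℝ) < r := hr
  have hb : (0:ℝ) ≤ (1 - Real.cos r) * r ^ (-(5/2) : ℝ) :=
    mul_nonneg (one_sub_cos_nonneg r) (Real.rpow_pos_of_pos hr0 _).le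
  calc (1 - Real.cos r) * r ^ (-(5/2):ℝ) * κ (l / r)
      ≤ (1 - Real.cos r) * r ^ (-(5/2):ℝ) * (κ l * Dlog r) :=
        mul_le_mul_of_nonneg_left (kdiv_le hκ1 hmono hlog hl hr0) hb
    _ = κ l * baseG r := by rw [baseG]; ring

include hκ1 hmono hdbl hlog in
lemma phi_ge {l : ℝ} (hl : 0 ≤ l) :
    4 * Real.pi * ((1 - Real.cos 1) * 2 ^ (-(5/2) : ℝ) / c₀) * κ l ≤ phiOf κ l := by
  have hc0 : (1:ℝ) ≤ c₀ := c0_ge_one hκ1 hdbl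
  have hk1 : (1:ℝ) ≤ κ l := hκ1 l hl
  have hpi : (0:ℝ) ≤ 4 * Real.pi := by positivity
  rw [phiOf]
  have step1 : ∫ r in Ioo (1:ℝ) 2, (1 - Real.cos r) * r ^ (-(5 / 2) : ℝ) * κ (l / r)
      ≤ ∫ r in Ioi (0:ℝ), (1 - Real.cos r) * r ^ (-(5 / 2) : ℝ) * κ (l / r) := by
    apply setIntegral_mono_set (hInt hκ1 hmono hlog hl)
    · filter_upwards [ae_restrict_mem measurableSet_Ioi] with r hr
      have hr0 : (0:ℝ) < r := hr
      have hκr : (0:ℝ) ≤ κ (l / r) := le_trans zero_le_one (hκ1 _ (div_nonneg hl hr0.le))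
      exact mul_nonneg (mul_nonneg (one_sub_cos_nonneg r)
        (Real.rpow_pos_of_pos hr0 _).le) hκr
    · filter_upwards with r hr
      exact lt_trans zero_lt_one hr.1
  have step2 : (1 - Real.cos 1) * 2 ^ (-(5/2) : ℝ) * (κ l / c₀)
      ≤ ∫ r in Ioo (1:ℝ) 2, (1 - Real.cos r) * r ^ (-(5 / 2) : ℝ) * κ (l / r) := by
    have hvol : (volume (Ioo (1:ℝ) 2)) = 1 := by
      rw [Real.volume_Ioo]; norm_num
    have hconst : ∫ _ in Ioo (1:ℝ) 2,
        ((1 - Real.cos 1) * 2 ^ (-(5/2) : ℝ) * (κ l / c₀)) =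
        (1 - Real.cos 1) * 2 ^ (-(5/2) : ℝ) * (κ l / c₀) := by
      rw [setIntegral_const, measureReal_def, hvol]; simp
    rw [← hconst]
    apply setIntegral_mono_on
    · exact integrableOn_const (by rw [hvol]; norm_num)
    · exact (hInt hκ1 hmono hlog hl).mono_set (fun r hr => lt_trans zero_lt_one hr.1)
    · exact measurableSet_Ioo
    · intro r hr
      obtain ⟨hr1, hr2⟩ := hr
      have hr0 : (0:ℝ) < r := lt_trans zero_lt_one hr1
      -- cos r ≤ cos 1
      have hcos : Real.cos r ≤ Real.cos 1 := by
        have hpi3 := Real.pi_gt_three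
        apply (Real.strictAntiOn_cos ⟨by norm_num, by linarith⟩
          ⟨by linarith, by linarith⟩ hr1).le
      have hrpow : (2:ℝ) ^ (-(5/2) : ℝ) ≤ r ^ (-(5/2) : ℝ) :=
        Real.rpow_le_rpow_of_nonpos hr0 hr2.le (by norm_num)
      have hκr : κ l / c₀ ≤ κ (l / r) := by
        have h2 : κ l ≤ c₀ * κ (l / 2) := by
          have := hdbl (l / 2) (div_nonneg hl (by norm_num))
          rw [show 2 * (l/2) = l by ring] at this
          exact this
        have h3 : κ (l / 2) ≤ κ (l / r) := by
          apply hmono _ _ (div_nonneg hl (by norm_num))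
          apply div_le_div_of_nonneg_left hl hr0 hr2.le
        rw [div_le_iff₀ (by linarith : (0:ℝ) < c₀)]
        calc κ l ≤ c₀ * κ (l/2) := h2
          _ ≤ c₀ * κ (l/r) := by
              apply mul_le_mul_of_nonneg_left h3 (by linarith)
          _ = κ (l/r) * c₀ := by ring
      have hb1 : (0:ℝ) ≤ 1 - Real.cos 1 := one_sub_cos_nonneg 1
      have hb2 : (0:ℝ) < (2:ℝ) ^ (-(5/2) : ℝ) := by positivity
      have hκr0 : (0:ℝ) ≤ κ l / c₀ := by positivity
      calc (1 - Real.cos 1) * 2 ^ (-(5/2) : ℝ) * (κ l / c₀)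
          ≤ (1 - Real.cos r) * r ^ (-(5/2) : ℝ) * (κ l / c₀) := by
            apply mul_le_mul_of_nonneg_right _ hκr0
            apply mul_le_mul (by linarith) hrpow hb2.le (one_sub_cos_nonneg r)
        _ ≤ (1 - Real.cos r) * r ^ (-(5/2) : ℝ) * κ (l / r) := by
            apply mul_le_mul_of_nonneg_left hκr
            exact mul_nonneg (one_sub_cos_nonneg r) (Real.rpow_pos_of_pos hr0 _).le
  calc 4 * Real.pi * ((1 - Real.cos 1) * 2 ^ (-(5/2) : ℝ) / c₀) * κ l
      = 4 * Real.pi * ((1 - Real.cos 1) * 2 ^ (-(5/2) : ℝ) * (κ l / c₀)) := by ring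
    _ ≤ 4 * Real.pi * ∫ r in Ioi (0:ℝ), (1 - Real.cos r) * r ^ (-(5 / 2) : ℝ) * κ (l / r) :=
        mul_le_mul_of_nonneg_left (step2.trans step1) hpi

include hκ1 hmono hlog in
lemma phi_mono {l m : ℝ} (hl : 0 ≤ l) (hlm : l ≤ m) : phiOf κ l ≤ phiOf κ m := by
  rw [phiOf, phiOf]
  apply mul_le_mul_of_nonneg_left _ (by positivity : (0:ℝ) ≤ 4 * Real.pi)
  apply setIntegral_mono_on (hInt hκ1 hmono hlog hl)
    (hInt hκ1 hmono hlog (hl.trans hlm)) measurableSet_Ioi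
  intro r hr
  have hr0 : (0:ℝ) < r := hr
  apply mul_le_mul_of_nonneg_left
  · exact hmono _ _ (div_nonneg hl hr0.le) (by gcongr)
  · exact mul_nonneg (one_sub_cos_nonneg r) (Real.rpow_pos_of_pos hr0 _).le

include hκ1 hlog in
lemma keyK {α : ℝ} (hα : 0 < α) :
    ∃ C : ℝ, 1 ≤ C ∧ ∀ x l : ℝ, 0 ≤ x → x ≤ l →
      x ^ α * κ l ^ 2 ≤ C * l ^ α * κ x ^ 2 := by
  obtain ⟨C, hC1, hC⟩ := scalar_log hα
  refine ⟨C, hC1, fun x l hx hxl => ?_⟩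
  have hl : 0 ≤ l := hx.trans hxl
  have hkx : (1:ℝ) ≤ κ x := hκ1 x hx
  have hkl : (1:ℝ) ≤ κ l := hκ1 l hl
  have hlogx_pos : (0:ℝ) < Real.log (4 + x) := Real.log_pos (by linarith)
  have hk := klog hκ1 hlog hx hxl
  have hxα0 : 0 ≤ x ^ α := Real.rpow_nonneg hx α
  have hlα0 : 0 ≤ l ^ α := Real.rpow_nonneg hl α
  have hkl2 : κ l ^ 2 ≤ κ x ^2 * (Real.log (4+l)^2 / Real.log (4+x)^2) := by
    have h0 : (0:ℝ) ≤ κ x * (Real.log (4 + l) / Real.log (4 + x)) := by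
      have : (0:ℝ) < Real.log (4+l) := Real.log_pos (by linarith)
      positivity
    calc κ l ^ 2 ≤ (κ x * (Real.log (4 + l) / Real.log (4 + x)))^2 :=
          pow_le_pow_left₀ (by linarith) hk 2
      _ = κ x ^2 * (Real.log (4+l)^2 / Real.log (4+x)^2) := by
          rw [mul_pow, div_pow]
  calc x ^ α * κ l ^ 2 ≤ x ^ α * (κ x ^2 * (Real.log (4+l)^2 / Real.log (4+x)^2)) :=
        mul_le_mul_of_nonneg_left hkl2 hxα0
    _ = (x ^ α * Real.log (4+l)^2) * (κ x^2 / Real.log (4+x)^2) := by ring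
    _ ≤ (C * l ^ α * Real.log (4 + x) ^ 2) * (κ x^2 / Real.log (4+x)^2) := by
        apply mul_le_mul_of_nonneg_right (hC x l hx hxl)
        positivity
    _ = C * l ^ α * κ x ^ 2 := by
        field_simp

end Kappa


local notation "E2" => EuclideanSpace ℝ (Fin 2)

lemma schwartz_int (h : SchwartzMap E2 ℂ) {p : ℝ} (hp : 0 ≤ p) :
    Integrable (fun ξ : E2 => (1 + ‖ξ‖) ^ p * ‖h ξ‖ ^ 2) := by
  set k : ℕ := ⌈p⌉₊ + 2 with hk
  set M : ℝ := 2 ^ k * (Finset.Iic (k, 0)).sup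
    (fun m' => SchwartzMap.seminorm ℝ m'.1 m'.2) h with hM
  have hMb : ∀ x : E2, (1 + ‖x‖) ^ k * ‖h x‖ ≤ M := by
    intro x
    have := SchwartzMap.one_add_le_sup_seminorm_apply (𝕜 := ℝ) (m := (k, 0))
      le_rfl le_rfl h x
    rwa [norm_iteratedFDeriv_zero] at this
  have hM0 : 0 ≤ M :=
    le_trans (by positivity : (0:ℝ) ≤ (1 + ‖(0:E2)‖) ^ k * ‖h 0‖) (hMb 0)
  have hbound : ∀ x : E2, (1 + ‖x‖) ^ p * ‖h x‖ ^ 2 ≤ M ^ 2 * (1 + ‖x‖) ^ (-(3:ℝ)) := by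
    intro x
    have h1x : (0:ℝ) < 1 + ‖x‖ := by positivity
    have h1x1 : (1:ℝ) ≤ 1 + ‖x‖ := by linarith [norm_nonneg x]
    have hpow : (0:ℝ) < (1 + ‖x‖) ^ (k:ℕ) := by positivity
    have hh : ‖h x‖ ≤ M * (1 + ‖x‖) ^ (-(k:ℝ)) := by
      have h1 : ‖h x‖ ≤ M / (1 + ‖x‖) ^ (k:ℕ) := by
        rw [le_div_iff₀ hpow, mul_comm]
        exact hMb x
      rwa [div_eq_mul_inv, ← Real.rpow_natCast (1 + ‖x‖) k, ← Real.rpow_neg h1x.le] at h1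
    have hsq : ‖h x‖ ^ 2 ≤ M ^ 2 * ((1 + ‖x‖) ^ (-(k:ℝ))) ^ 2 := by
      calc ‖h x‖ ^ 2 ≤ (M * (1 + ‖x‖) ^ (-(k:ℝ))) ^ 2 :=
            pow_le_pow_left₀ (norm_nonneg _) hh 2
        _ = M ^ 2 * ((1 + ‖x‖) ^ (-(k:ℝ))) ^ 2 := by rw [mul_pow]
    have e1 : ((1 + ‖x‖) ^ (-(k:ℝ))) ^ 2 = (1 + ‖x‖) ^ (-(2*k:ℝ)) := by
      rw [← Real.rpow_natCast ((1 + ‖x‖) ^ (-(k:ℝ))) 2, ← Real.rpow_mul h1x.le]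
      push_cast; ring_nf
    have hexp : p + -(2*k:ℝ) ≤ -(3:ℝ) := by
      have h1 : p ≤ (⌈p⌉₊ : ℝ) := Nat.le_ceil p
      have h2 : (k:ℝ) = (⌈p⌉₊ : ℝ) + 2 := by rw [hk]; push_cast; ring
      rw [h2]; linarith
    calc (1 + ‖x‖) ^ p * ‖h x‖ ^ 2 ≤ (1 + ‖x‖) ^ p * (M ^ 2 * (1 + ‖x‖) ^ (-(2*k:ℝ))) := by
          rw [← e1]
          exact mul_le_mul_of_nonneg_left hsq (by positivity)
      _ = M ^ 2 * (1 + ‖x‖) ^ (p + -(2*k:ℝ)) := by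
          rw [Real.rpow_add h1x]; ring
      _ ≤ M ^ 2 * (1 + ‖x‖) ^ (-(3:ℝ)) := by
          apply mul_le_mul_of_nonneg_left _ (by positivity)
          exact Real.rpow_le_rpow_of_exponent_le h1x1 hexp
  have hint : Integrable (fun x : E2 => M ^ 2 * (1 + ‖x‖) ^ (-(3:ℝ))) := by
    apply Integrable.const_mul
    apply integrable_one_add_norm (E := E2)
    rw [finrank_euclideanSpace_fin]; norm_num
  apply Integrable.mono' hint
  · apply Continuous.aestronglyMeasurable
    apply Continuous.mul
    · exact (continuous_const.add continuous_norm).rpow_const (fun x => Or.inr hp)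
    · exact (h.continuous.norm.pow 2)
  · filter_upwards with x
    rw [Real.norm_eq_abs, abs_of_nonneg (by positivity)]
    exact hbound x


lemma ptwise {φ κ : ℝ → ℝ} {c₂ cl CK s : ℝ}
    (hs2 : 2 < s) (hs : s < 5/2) (hcl : 0 < cl)
    (hub : ∀ t, 0 ≤ t → φ t ≤ c₂ * κ t)
    (hlb : ∀ t, 0 ≤ t → cl * κ t ≤ φ t)
    (hφmono : ∀ t u, 0 ≤ t → t ≤ u → φ t ≤ φ u)
    (hφ0 : ∀ t, 0 ≤ t → 0 ≤ φ t)
    (hκ0 : ∀ t, 0 ≤ t → 0 ≤ κ t)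
    (hCK1 : 1 ≤ CK)
    (hK : ∀ x l : ℝ, 0 ≤ x → x ≤ l →
      x ^ (2*s-4) * κ l ^ 2 ≤ CK * l ^ (2*s-4) * κ x ^ 2) :
    ∀ l x : ℝ, 0 < l → 0 ≤ x →
      x ^ (2*s) * φ l ^ 2 ≤ (max 1 (CK * c₂^2 / cl^2)) *
        (l ^ (2*s-5) * (x ^ ((5:ℝ)/2) * φ x) ^ 2 +
         l ^ (2*s-4) * (x ^ ((2:ℝ)) * φ x) ^ 2) := by
  intro l x hl hx
  set K : ℝ := max 1 (CK * c₂^2 / cl^2) with hKdef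
  have hK1 : (1:ℝ) ≤ K := le_max_left _ _
  have hT1 : 0 ≤ l ^ (2*s-5) * (x ^ ((5:ℝ)/2) * φ x) ^ 2 :=
    mul_nonneg (Real.rpow_nonneg hl.le _) (sq_nonneg _)
  have hT2 : 0 ≤ l ^ (2*s-4) * (x ^ ((2:ℝ)) * φ x) ^ 2 :=
    mul_nonneg (Real.rpow_nonneg hl.le _) (sq_nonneg _)
  rcases eq_or_lt_of_le hx with hx0 | hx0
  · subst hx0
    rw [Real.zero_rpow (by linarith : 2*s ≠ 0), zero_mul]
    nlinarith
  · have hφx0 : 0 ≤ φ x := hφ0 x hx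
    have hφl0 : 0 ≤ φ l := hφ0 l hl.le
    have e5 : (x ^ ((5:ℝ)/2) * φ x) ^ 2 = x ^ ((5:ℝ)) * φ x ^ 2 := by
      rw [mul_pow, ← Real.rpow_natCast (x ^ ((5:ℝ)/2)) 2, ← Real.rpow_mul hx,
        show (5:ℝ)/2*(2:ℕ) = 5 by push_cast; ring]
    have e4 : (x ^ ((2:ℝ)) * φ x) ^ 2 = x ^ ((4:ℝ)) * φ x ^ 2 := by
      rw [mul_pow, ← Real.rpow_natCast (x ^ ((2:ℝ))) 2, ← Real.rpow_mul hx,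
        show (2:ℝ)*(2:ℕ) = 4 by push_cast; ring]
    rcases le_or_gt l x with hlx | hxl
    · -- high frequency : l ≤ x
      have ex : x ^ (2*s) = x ^ (2*s-5) * x ^ ((5:ℝ)) := by
        rw [← Real.rpow_add hx0, show 2*s-5+5 = 2*s by ring]
      have h1 : x ^ (2*s-5) ≤ l ^ (2*s-5) :=
        Real.rpow_le_rpow_of_nonpos hl hlx (by linarith)
      have h2 : φ l ^ 2 ≤ φ x ^ 2 :=
        pow_le_pow_left₀ hφl0 (hφmono l x hl.le hlx) 2
      have key : x ^ (2*s) * φ l ^ 2 ≤ l ^ (2*s-5) * (x ^ ((5:ℝ)) * φ x ^ 2) := by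
        rw [ex]
        have hx5 : 0 ≤ x ^ ((5:ℝ)) := Real.rpow_nonneg hx _
        calc x ^ (2*s-5) * x ^ ((5:ℝ)) * φ l ^ 2
            ≤ l ^ (2*s-5) * x ^ ((5:ℝ)) * φ l ^ 2 := by
              apply mul_le_mul_of_nonneg_right (mul_le_mul_of_nonneg_right h1 hx5)
                (sq_nonneg _)
          _ ≤ l ^ (2*s-5) * x ^ ((5:ℝ)) * φ x ^ 2 := by
              apply mul_le_mul_of_nonneg_left h2
              exact mul_nonneg (Real.rpow_nonneg hl.le _) hx5
          _ = l ^ (2*s-5) * (x ^ ((5:ℝ)) * φ x ^ 2) := by ring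
      rw [← e5] at key
      nlinarith
    · -- low frequency : x < l
      have ex : x ^ (2*s) = x ^ (2*s-4) * x ^ ((4:ℝ)) := by
        rw [← Real.rpow_add hx0, show 2*s-4+4 = 2*s by ring]
      have hκl0 : 0 ≤ κ l := hκ0 l hl.le
      have hκx0 : 0 ≤ κ x := hκ0 x hx
      have hup : φ l ^ 2 ≤ c₂ ^ 2 * κ l ^ 2 := by
        have h := pow_le_pow_left₀ hφl0 (hub l hl.le) 2
        rwa [mul_pow] at h
      have hkx : κ x ^ 2 ≤ φ x ^ 2 / cl ^ 2 := by
        have h1 : κ x ≤ φ x / cl := by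
          rw [le_div_iff₀ hcl, mul_comm]
          exact hlb x hx
        have h := pow_le_pow_left₀ hκx0 h1 2
        rwa [div_pow] at h
      have hxa0 : 0 ≤ x ^ (2*s-4) := Real.rpow_nonneg hx _
      have hx40 : 0 ≤ x ^ ((4:ℝ)) := Real.rpow_nonneg hx _
      have hla0 : 0 ≤ l ^ (2*s-4) := Real.rpow_nonneg hl.le _
      have step : x ^ (2*s-4) * φ l ^ 2 ≤ (CK * c₂^2 / cl^2) * (l ^ (2*s-4) * φ x ^ 2) := by
        calc x ^ (2*s-4) * φ l ^ 2 ≤ x ^ (2*s-4) * (c₂ ^ 2 * κ l ^ 2) :=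
              mul_le_mul_of_nonneg_left hup hxa0
          _ = c₂ ^ 2 * (x ^ (2*s-4) * κ l ^ 2) := by ring
          _ ≤ c₂ ^ 2 * (CK * l ^ (2*s-4) * κ x ^ 2) := by
              apply mul_le_mul_of_nonneg_left (hK x l hx hxl.le) (sq_nonneg _)
          _ ≤ c₂ ^ 2 * (CK * l ^ (2*s-4) * (φ x ^ 2 / cl ^ 2)) := by
              apply mul_le_mul_of_nonneg_left _ (sq_nonneg _)
              apply mul_le_mul_of_nonneg_left hkx
              exact mul_nonneg (by linarith) hla0
          _ = (CK * c₂^2 / cl^2) * (l ^ (2*s-4) * φ x ^ 2) := by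
              field_simp
      have hKge : CK * c₂^2 / cl^2 ≤ K := le_max_right _ _
      have step2 : x ^ (2*s) * φ l ^ 2 ≤ K * (l ^ (2*s-4) * (x ^ ((2:ℝ)) * φ x) ^ 2) := by
        rw [ex, e4]
        have hr : 0 ≤ l ^ (2*s-4) * φ x ^ 2 := mul_nonneg hla0 (sq_nonneg _)
        calc x ^ (2*s-4) * x ^ ((4:ℝ)) * φ l ^ 2
            = (x ^ (2*s-4) * φ l ^ 2) * x ^ ((4:ℝ)) := by ring
          _ ≤ ((CK * c₂^2 / cl^2) * (l ^ (2*s-4) * φ x ^ 2)) * x ^ ((4:ℝ)) :=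
              mul_le_mul_of_nonneg_right step hx40
          _ ≤ (K * (l ^ (2*s-4) * φ x ^ 2)) * x ^ ((4:ℝ)) := by
              apply mul_le_mul_of_nonneg_right (mul_le_mul_of_nonneg_right hKge hr) hx40
          _ = K * (l ^ (2*s-4) * (x ^ ((4:ℝ)) * φ x ^ 2)) := by ring
      nlinarith


set_option maxHeartbeats 2000000 in
theorem stmt_16 (s : ℝ) (hs2 : 2 < s) (hs : s < 5 / 2) (κ : ℝ → ℝ) (c₀ : ℝ)
    (hκ1 : ∀ r : ℝ, 0 ≤ r → 1 ≤ κ r)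
    (hmono : ∀ r u : ℝ, 0 ≤ r → r ≤ u → κ r ≤ κ u)
    (hdbl : ∀ r : ℝ, 0 ≤ r → κ (2 * r) ≤ c₀ * κ r)
    (hlog : ∀ r u : ℝ, 0 ≤ r → r ≤ u →
      κ u / Real.log (4 + u) ≤ κ r / Real.log (4 + r)) :
    ∃ C : ℝ, 0 < C ∧ ∀ f : SchwartzMap (EuclideanSpace ℝ (Fin 2)) ℂ,
      (HsqNorm s ⇑f) ^ ((1 : ℝ) / 2) ≤
        C * (phiOf κ
              ((∫ ξ : EuclideanSpace ℝ (Fin 2),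
                  (‖ξ‖ ^ (5 / 2 : ℝ) * phiOf κ ‖ξ‖) ^ 2 * ‖𝓕 ⇑f ξ‖ ^ 2) /
                ∫ ξ : EuclideanSpace ℝ (Fin 2),
                  (‖ξ‖ ^ (2 : ℝ) * phiOf κ ‖ξ‖) ^ 2 * ‖𝓕 ⇑f ξ‖ ^ 2))⁻¹ *
          (∫ ξ : EuclideanSpace ℝ (Fin 2),
              (‖ξ‖ ^ (2 : ℝ) * phiOf κ ‖ξ‖) ^ 2 * ‖𝓕 ⇑f ξ‖ ^ 2) ^ (5 / 2 - s) *
          (∫ ξ : EuclideanSpace ℝ (Fin 2),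
              (‖ξ‖ ^ (5 / 2 : ℝ) * phiOf κ ‖ξ‖) ^ 2 * ‖𝓕 ⇑f ξ‖ ^ 2) ^ (s - 2) := by
  have hπ : (0:ℝ) < Real.pi := Real.pi_pos
  have hc₀1 : 1 ≤ c₀ := c0_ge_one hκ1 hdbl
  have hcos1 : Real.cos 1 < 1 := by
    have h := Real.strictAntiOn_cos (Set.mem_Icc.mpr ⟨le_rfl, Real.pi_nonneg⟩)
      (Set.mem_Icc.mpr ⟨zero_le_one, by linarith [Real.pi_gt_three]⟩) zero_lt_one
    rwa [Real.cos_zero] at h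
  set cl : ℝ := 4 * Real.pi * ((1 - Real.cos 1) * 2 ^ (-(5/2) : ℝ) / c₀) with hcldef
  have hclpos : 0 < cl := by
    have h2 : (0:ℝ) < (2:ℝ) ^ (-(5/2):ℝ) := Real.rpow_pos_of_pos two_pos _
    have h3 : (0:ℝ) < (1 - Real.cos 1) * 2 ^ (-(5/2) : ℝ) / c₀ :=
      div_pos (mul_pos (by linarith) h2) (by linarith)
    have h4 : (0:ℝ) < 4 * Real.pi := by linarith
    exact mul_pos h4 h3
  set c₂ : ℝ := 4 * Real.pi * ∫ r in Set.Ioi (0:ℝ), baseG r with hc₂def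
  have hub : ∀ t, 0 ≤ t → phiOf κ t ≤ c₂ * κ t := fun t ht => phi_le hκ1 hmono hlog ht
  have hlb : ∀ t, 0 ≤ t → cl * κ t ≤ phiOf κ t := fun t ht => phi_ge hκ1 hmono hdbl hlog ht
  have hκnn : ∀ t, 0 ≤ t → 0 ≤ κ t := fun t ht => le_trans zero_le_one (hκ1 t ht)
  have hφpos : ∀ t, 0 ≤ t → 0 < phiOf κ t := by
    intro t ht
    have h1 : 0 < cl * κ t := mul_pos hclpos (lt_of_lt_of_le one_pos (hκ1 t ht))
    exact lt_of_lt_of_le h1 (hlb t ht)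
  have hφmono : ∀ t u, 0 ≤ t → t ≤ u → phiOf κ t ≤ phiOf κ u :=
    fun t u ht htu => phi_mono hκ1 hmono hlog ht htu
  have hc₂pos : 0 < c₂ := by
    by_contra hcon
    push_neg at hcon
    have h1 : c₂ * κ 0 ≤ 0 := mul_nonpos_of_nonpos_of_nonneg hcon (hκnn 0 le_rfl)
    have h2 := hub 0 le_rfl
    have h3 := hφpos 0 le_rfl
    linarith
  obtain ⟨CK, hCK1, hCK⟩ := keyK hκ1 hlog (α := 2*s-4) (by linarith)
  set K : ℝ := max 1 (CK * c₂^2 / cl^2) with hKdef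
  have hK1 : (1:ℝ) ≤ K := le_max_left _ _
  have hKpos : (0:ℝ) < K := lt_of_lt_of_le one_pos hK1
  have hl4 := one_lt_log_four
  set Cφ : ℝ := c₂ * κ 0 * 3 / Real.log 4 with hCφdef
  have hκ00 : (1:ℝ) ≤ κ 0 := hκ1 0 le_rfl
  have hCφpos : 0 < Cφ := by
    apply div_pos _ (by linarith)
    nlinarith
  have hφlin : ∀ t : ℝ, 0 ≤ t → phiOf κ t ≤ Cφ * (1 + t) := by
    intro t ht
    have hκc : κ t ≤ κ 0 * (Real.log (4 + t) / Real.log 4) := by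
      have h := klog hκ1 hlog (x := 0) (l := t) le_rfl ht
      rwa [show (4:ℝ) + 0 = 4 by norm_num] at h
    have hlog3 : Real.log (4 + t) ≤ 3 + t := by
      have := Real.log_le_sub_one_of_pos (show (0:ℝ) < 4 + t by linarith)
      linarith
    have h1 : κ t ≤ κ 0 * ((3 + t) / Real.log 4) := by
      refine hκc.trans (mul_le_mul_of_nonneg_left ?_ (by linarith))
      exact div_le_div_of_nonneg_right hlog3 (by linarith)
    have h2 : phiOf κ t ≤ c₂ * (κ 0 * ((3 + t) / Real.log 4)) :=
      (hub t ht).trans (mul_le_mul_of_nonneg_left h1 hc₂pos.le)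
    refine h2.trans ?_
    have e : Cφ * (1 + t) = c₂ * (κ 0 * ((3 * (1 + t)) / Real.log 4)) := by
      rw [hCφdef]; field_simp
    rw [e]
    apply mul_le_mul_of_nonneg_left _ hc₂pos.le
    apply mul_le_mul_of_nonneg_left _ (by linarith)
    exact div_le_div_of_nonneg_right (by linarith) (by linarith)
  refine ⟨(2*K) ^ ((1:ℝ)/2), Real.rpow_pos_of_pos (by linarith) _, ?_⟩
  intro f
  set F2 : SchwartzMap E2 ℂ := SchwartzMap.fourierTransformCLM ℝ f with hF2def
  have hF2 : ⇑F2 = 𝓕 ⇑f := rfl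
  have hgc : Continuous (𝓕 ⇑f) := hF2 ▸ F2.continuous
  have hφnmeas : Measurable (fun ξ : E2 => phiOf κ ‖ξ‖) := by
    have hm : Monotone (fun t : ℝ => phiOf κ (max t 0)) := fun a b hab =>
      hφmono _ _ (le_max_right _ _) (max_le_max hab le_rfl)
    have he : (fun ξ : E2 => phiOf κ ‖ξ‖) =
        (fun t : ℝ => phiOf κ (max t 0)) ∘ (fun ξ : E2 => ‖ξ‖) := by
      funext ξ
      simp [max_eq_left (norm_nonneg ξ)]
    rw [he]
    exact hm.measurable.comp measurable_norm
  -- generic integrability of weighted integrands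
  have wint : ∀ (σ : ℝ), 0 ≤ σ → ∀ (w : E2 → ℝ) (W : ℝ), 0 ≤ W → Measurable w →
      (∀ ξ : E2, 0 ≤ w ξ ∧ w ξ ≤ W * (1 + ‖ξ‖)) →
      Integrable (fun ξ : E2 => (‖ξ‖ ^ σ * w ξ)^2 * ‖𝓕 ⇑f ξ‖^2) := by
    intro σ hσ w W hW hwmeas hwb
    apply Integrable.mono' ((schwartz_int F2 (p := 2*σ+2) (by linarith)).const_mul (W^2))
    · have m1 : Measurable (fun ξ : E2 => ‖ξ‖ ^ σ) :=
        (continuous_norm.rpow_const (fun x => Or.inr hσ)).measurable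
      exact (((m1.mul hwmeas).pow_const 2).mul
        (hgc.norm.measurable.pow_const 2)).aestronglyMeasurable
    · filter_upwards with ξ
      obtain ⟨hwnn, hwle⟩ := hwb ξ
      rw [Real.norm_eq_abs, abs_of_nonneg (by positivity)]
      have h1x : (0:ℝ) < 1 + ‖ξ‖ := by positivity
      have h1 : ‖ξ‖ ^ σ ≤ (1 + ‖ξ‖) ^ σ :=
        Real.rpow_le_rpow (norm_nonneg _) (by linarith [norm_nonneg ξ]) hσ
      have h2 : ‖ξ‖ ^ σ * w ξ ≤ (1 + ‖ξ‖) ^ σ * (W * (1 + ‖ξ‖)) :=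
        mul_le_mul h1 hwle hwnn (by positivity)
      have e : ((1 + ‖ξ‖) ^ σ * (W * (1 + ‖ξ‖)))^2 = W^2 * (1 + ‖ξ‖) ^ (2*σ+2) := by
        have e1 : ((1 + ‖ξ‖) ^ σ)^2 = (1 + ‖ξ‖) ^ (2*σ) := by
          rw [← Real.rpow_natCast ((1 + ‖ξ‖) ^ σ) 2, ← Real.rpow_mul h1x.le,
            show σ * ((2:ℕ):ℝ) = 2*σ by push_cast; ring]
        have e2 : (1 + ‖ξ‖)^(2:ℕ) = (1 + ‖ξ‖) ^ ((2:ℝ)) := by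
          rw [← Real.rpow_natCast (1 + ‖ξ‖) 2]; norm_num
        have e3 : (1 + ‖ξ‖) ^ (2*σ) * (1 + ‖ξ‖) ^ ((2:ℝ)) = (1 + ‖ξ‖) ^ (2*σ+2) := by
          rw [← Real.rpow_add h1x]
        calc ((1 + ‖ξ‖) ^ σ * (W * (1 + ‖ξ‖)))^2
            = ((1 + ‖ξ‖) ^ σ)^2 * W^2 * (1 + ‖ξ‖)^(2:ℕ) := by ring
          _ = (1 + ‖ξ‖) ^ (2*σ) * W^2 * (1 + ‖ξ‖) ^ ((2:ℝ)) := by rw [e1, e2]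
          _ = W^2 * ((1 + ‖ξ‖) ^ (2*σ) * (1 + ‖ξ‖) ^ ((2:ℝ))) := by ring
          _ = W^2 * (1 + ‖ξ‖) ^ (2*σ+2) := by rw [e3]
      have key : (‖ξ‖ ^ σ * w ξ)^2 ≤ W^2 * (1 + ‖ξ‖) ^ (2*σ+2) := by
        have h3 := pow_le_pow_left₀
          (mul_nonneg (Real.rpow_nonneg (norm_nonneg _) _) hwnn) h2 2
        exact h3.trans_eq e
      calc (‖ξ‖ ^ σ * w ξ)^2 * ‖𝓕 ⇑f ξ‖^2
          ≤ (W^2 * (1 + ‖ξ‖) ^ (2*σ+2)) * ‖𝓕 ⇑f ξ‖^2 :=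
            mul_le_mul_of_nonneg_right key (sq_nonneg _)
        _ = W^2 * ((1 + ‖ξ‖) ^ (2*σ+2) * ‖F2 ξ‖^2) := by rw [hF2]; ring
  have hφw : ∀ ξ : E2, 0 ≤ phiOf κ ‖ξ‖ ∧ phiOf κ ‖ξ‖ ≤ Cφ * (1 + ‖ξ‖) :=
    fun ξ => ⟨(hφpos _ (norm_nonneg ξ)).le, hφlin _ (norm_nonneg ξ)⟩
  have hintA : Integrable
      (fun ξ : E2 => (‖ξ‖ ^ (2:ℝ) * phiOf κ ‖ξ‖)^2 * ‖𝓕 ⇑f ξ‖^2) :=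
    wint 2 (by norm_num) _ Cφ hCφpos.le hφnmeas hφw
  have hintB : Integrable
      (fun ξ : E2 => (‖ξ‖ ^ (5/2:ℝ) * phiOf κ ‖ξ‖)^2 * ‖𝓕 ⇑f ξ‖^2) :=
    wint (5/2) (by norm_num) _ Cφ hCφpos.le hφnmeas hφw
  have hsInt : Integrable (fun ξ : E2 => ‖ξ‖ ^ (2*s) * ‖𝓕 ⇑f ξ‖^2) := by
    have h := wint s (by linarith) (fun _ => 1) 1 zero_le_one measurable_const
      (fun ξ => ⟨zero_le_one, by show (1:ℝ) ≤ 1 * (1 + ‖ξ‖); linarith [norm_nonneg ξ]⟩)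
    apply h.congr
    filter_upwards with ξ
    rw [mul_one, ← Real.rpow_natCast (‖ξ‖ ^ s) 2, ← Real.rpow_mul (norm_nonneg ξ),
      show s * ((2:ℕ):ℝ) = 2*s by push_cast; ring]
  set A : ℝ := ∫ ξ : EuclideanSpace ℝ (Fin 2),
      (‖ξ‖ ^ (2 : ℝ) * phiOf κ ‖ξ‖) ^ 2 * ‖𝓕 ⇑f ξ‖ ^ 2 with hAdef
  set B : ℝ := ∫ ξ : EuclideanSpace ℝ (Fin 2),
      (‖ξ‖ ^ (5 / 2 : ℝ) * phiOf κ ‖ξ‖) ^ 2 * ‖𝓕 ⇑f ξ‖ ^ 2 with hBdef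
  have hAnn : ∀ ξ : E2, (0:ℝ) ≤ (‖ξ‖ ^ (2:ℝ) * phiOf κ ‖ξ‖)^2 * ‖𝓕 ⇑f ξ‖^2 :=
    fun ξ => mul_nonneg (sq_nonneg _) (sq_nonneg _)
  have hBnn : ∀ ξ : E2, (0:ℝ) ≤ (‖ξ‖ ^ (5/2:ℝ) * phiOf κ ‖ξ‖)^2 * ‖𝓕 ⇑f ξ‖^2 :=
    fun ξ => mul_nonneg (sq_nonneg _) (sq_nonneg _)
  have hA0 : 0 ≤ A := integral_nonneg hAnn
  have hB0 : 0 ≤ B := integral_nonneg hBnn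
  have hHs0 : 0 ≤ HsqNorm s ⇑f := integral_nonneg
    (fun ξ => mul_nonneg (Real.rpow_nonneg (norm_nonneg _) _) (sq_nonneg _))
  by_cases hg0 : (𝓕 ⇑f) =ᵐ[(volume : Measure E2)] 0
  · -- degenerate case
    have hAeq : A = 0 := by
      rw [hAdef]
      apply integral_eq_zero_of_ae
      filter_upwards [hg0] with ξ hξ
      simp [hξ]
    have hBeq : B = 0 := by
      rw [hBdef]
      apply integral_eq_zero_of_ae
      filter_upwards [hg0] with ξ hξ
      simp [hξ]
    have hHs : HsqNorm s ⇑f = 0 := by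
      rw [HsqNorm]
      apply integral_eq_zero_of_ae
      filter_upwards [hg0] with ξ hξ
      simp [hξ]
    rw [hHs, hAeq, hBeq, Real.zero_rpow (by norm_num : (1:ℝ)/2 ≠ 0),
      Real.zero_rpow (show (5:ℝ)/2 - s ≠ 0 from ne_of_gt (by linarith))]
    have hRHS : (2*K) ^ ((1:ℝ)/2) * (phiOf κ ((0:ℝ)/0))⁻¹ * 0 * (0:ℝ) ^ (s-2) = 0 := by
      ring
    rw [hRHS]
  · -- nondegenerate case
    have hsing : (volume : Measure E2) {(0:E2)} = 0 := measure_singleton 0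
    have hne0 : ∀ᵐ ξ : E2, ξ ≠ 0 := by
      rw [MeasureTheory.ae_iff]
      convert hsing using 2
      ext x
      simp
    have hposA : 0 < A := by
      rcases eq_or_lt_of_le hA0 with he | h
      · exfalso
        apply hg0
        have hae := (integral_eq_zero_iff_of_nonneg_ae
          (Filter.Eventually.of_forall hAnn) hintA).mp (hAdef ▸ he.symm)
        filter_upwards [hae, hne0] with ξ h1 h2
        have hn : 0 < ‖ξ‖ := norm_pos_iff.mpr h2
        have hfac : (0:ℝ) < ‖ξ‖ ^ (2:ℝ) * phiOf κ ‖ξ‖ :=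
          mul_pos (Real.rpow_pos_of_pos hn _) (hφpos _ (norm_nonneg _))
        rcases mul_eq_zero.mp h1 with h | h
        · exact absurd h (pow_ne_zero 2 (ne_of_gt hfac))
        · have := pow_eq_zero_iff (n := 2) (by norm_num) |>.mp h
          simpa using this
      · exact h
    have hposB : 0 < B := by
      rcases eq_or_lt_of_le hB0 with he | h
      · exfalso
        apply hg0
        have hae := (integral_eq_zero_iff_of_nonneg_ae
          (Filter.Eventually.of_forall hBnn) hintB).mp (hBdef ▸ he.symm)
        filter_upwards [hae, hne0] with ξ h1 h2
        have hn : 0 < ‖ξ‖ := norm_pos_iff.mpr h2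
        have hfac : (0:ℝ) < ‖ξ‖ ^ (5/2:ℝ) * phiOf κ ‖ξ‖ :=
          mul_pos (Real.rpow_pos_of_pos hn _) (hφpos _ (norm_nonneg _))
        rcases mul_eq_zero.mp h1 with h | h
        · exact absurd h (pow_ne_zero 2 (ne_of_gt hfac))
        · have := pow_eq_zero_iff (n := 2) (by norm_num) |>.mp h
          simpa using this
      · exact h
    set lam : ℝ := B / A with hlamdef
    have hlam : 0 < lam := div_pos hposB hposA
    set q : ℝ := phiOf κ lam with hqdef
    have hq : 0 < q := hφpos lam hlam.le
    have hqne : q ≠ 0 := ne_of_gt hq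
    have hqinv0 : (0:ℝ) ≤ q⁻¹ := inv_nonneg.mpr hq.le
    have hptw := ptwise (φ := phiOf κ) (κ := κ) hs2 hs hclpos hub hlb hφmono
      (fun t ht => (hφpos t ht).le) hκnn hCK1 hCK
    have hpt : ∀ ξ : E2, ‖ξ‖ ^ (2*s) * ‖𝓕 ⇑f ξ‖^2 ≤
        (K * (q⁻¹)^2) * ((lam ^ (2*s-5)) *
            ((‖ξ‖ ^ (5/2:ℝ) * phiOf κ ‖ξ‖)^2 * ‖𝓕 ⇑f ξ‖^2) +
          (lam ^ (2*s-4)) * ((‖ξ‖ ^ (2:ℝ) * phiOf κ ‖ξ‖)^2 * ‖𝓕 ⇑f ξ‖^2)) := by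
      intro ξ
      have h1 : ‖ξ‖ ^ (2*s) * (phiOf κ lam) ^ 2 ≤ K *
          (lam ^ (2*s-5) * (‖ξ‖ ^ ((5:ℝ)/2) * phiOf κ ‖ξ‖) ^ 2 +
           lam ^ (2*s-4) * (‖ξ‖ ^ ((2:ℝ)) * phiOf κ ‖ξ‖) ^ 2) :=
        hptw lam ‖ξ‖ hlam (norm_nonneg ξ)
      have hgn : (0:ℝ) ≤ (q⁻¹)^2 * ‖𝓕 ⇑f ξ‖^2 := by positivity
      have h2 := mul_le_mul_of_nonneg_right h1 hgn
      have hq1 : q * q⁻¹ = 1 := mul_inv_cancel₀ hqne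
      calc ‖ξ‖ ^ (2*s) * ‖𝓕 ⇑f ξ‖^2
          = (‖ξ‖ ^ (2*s) * (phiOf κ lam)^2) * ((q⁻¹)^2 * ‖𝓕 ⇑f ξ‖^2) := by
            rw [show (‖ξ‖ ^ (2*s) * (phiOf κ lam)^2) * ((q⁻¹)^2 * ‖𝓕 ⇑f ξ‖^2)
              = (q*q⁻¹)^2 * (‖ξ‖ ^ (2*s) * ‖𝓕 ⇑f ξ‖^2) from by rw [hqdef]; ring,
              hq1, one_pow, one_mul]
        _ ≤ (K * (lam ^ (2*s-5) * (‖ξ‖ ^ ((5:ℝ)/2) * phiOf κ ‖ξ‖) ^ 2 +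
              lam ^ (2*s-4) * (‖ξ‖ ^ ((2:ℝ)) * phiOf κ ‖ξ‖) ^ 2)) *
              ((q⁻¹)^2 * ‖𝓕 ⇑f ξ‖^2) := h2
        _ = (K * (q⁻¹)^2) * ((lam ^ (2*s-5)) *
              ((‖ξ‖ ^ (5/2:ℝ) * phiOf κ ‖ξ‖)^2 * ‖𝓕 ⇑f ξ‖^2) +
            (lam ^ (2*s-4)) * ((‖ξ‖ ^ (2:ℝ) * phiOf κ ‖ξ‖)^2 * ‖𝓕 ⇑f ξ‖^2)) := by
            ring
    have hmain : HsqNorm s ⇑f ≤ (K * (q⁻¹)^2) * ((lam ^ (2*s-5)) * B + (lam ^ (2*s-4)) * A) := by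
      rw [HsqNorm]
      calc (∫ ξ : E2, ‖ξ‖ ^ (2*s) * ‖𝓕 ⇑f ξ‖^2)
          ≤ ∫ ξ : E2, (K * (q⁻¹)^2) * ((lam ^ (2*s-5)) *
              ((‖ξ‖ ^ (5/2:ℝ) * phiOf κ ‖ξ‖)^2 * ‖𝓕 ⇑f ξ‖^2) +
            (lam ^ (2*s-4)) * ((‖ξ‖ ^ (2:ℝ) * phiOf κ ‖ξ‖)^2 * ‖𝓕 ⇑f ξ‖^2)) := by
            apply integral_mono hsInt
              (((hintB.const_mul _).add (hintA.const_mul _)).const_mul _) hpt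
        _ = (K * (q⁻¹)^2) * ((lam ^ (2*s-5)) * B + (lam ^ (2*s-4)) * A) := by
            rw [integral_const_mul, integral_add (hintB.const_mul _) (hintA.const_mul _),
              integral_const_mul, integral_const_mul]
    have hBne : B ≠ 0 := ne_of_gt hposB
    have e1 : lam ^ (2*s-5) * B = A ^ (5-2*s) * B ^ (2*s-4) := by
      rw [hlamdef, Real.div_rpow hB0 hA0, div_mul_eq_mul_div,
        ← Real.rpow_add_one hBne, show 2*s-5+1 = 2*s-4 by ring,
        div_eq_mul_inv, ← Real.rpow_neg hA0, show -(2*s-5) = 5-2*s by ring, mul_comm]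
    have e2 : lam ^ (2*s-4) * A = A ^ (5-2*s) * B ^ (2*s-4) := by
      rw [hlamdef, Real.div_rpow hB0 hA0, div_mul_eq_mul_div, mul_div_assoc]
      have hAA : A / A ^ (2*s-4) = A ^ (5-2*s) := by
        rw [show A / A ^ (2*s-4) = A ^ (1:ℝ) / A ^ (2*s-4) from by rw [Real.rpow_one],
          ← Real.rpow_sub hposA, show (1:ℝ)-(2*s-4) = 5-2*s by ring]
      rw [hAA, mul_comm]
    rw [e1, e2] at hmain
    have hfin : HsqNorm s ⇑f ≤ 2*K*(q⁻¹)^2*(A^(5-2*s)*B^(2*s-4)) := by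
      calc HsqNorm s ⇑f ≤ (K * (q⁻¹)^2) * (A ^ (5-2*s) * B ^ (2*s-4)
          + A ^ (5-2*s) * B ^ (2*s-4)) := hmain
        _ = 2*K*(q⁻¹)^2*(A^(5-2*s)*B^(2*s-4)) := by ring
    have hstep := Real.rpow_le_rpow hHs0 hfin (by norm_num : (0:ℝ) ≤ 1/2)
    refine hstep.trans_eq ?_
    have h2K0 : (0:ℝ) ≤ 2*K := by linarith
    have hq20 : (0:ℝ) ≤ (q⁻¹)^2 := sq_nonneg _
    have hA5 : (0:ℝ) ≤ A^(5-2*s) := Real.rpow_nonneg hA0 _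
    have hB2 : (0:ℝ) ≤ B^(2*s-4) := Real.rpow_nonneg hB0 _
    have f1 : ((q⁻¹)^2) ^ ((1:ℝ)/2) = q⁻¹ := by
      rw [← Real.rpow_natCast (q⁻¹) 2, ← Real.rpow_mul hqinv0,
        show ((2:ℕ):ℝ)*((1:ℝ)/2) = 1 by push_cast; ring, Real.rpow_one]
    have f2 : (A^(5-2*s)) ^ ((1:ℝ)/2) = A^(5/2-s) := by
      rw [← Real.rpow_mul hA0, show (5-2*s)*((1:ℝ)/2) = 5/2-s by ring]
    have f3 : (B^(2*s-4)) ^ ((1:ℝ)/2) = B^(s-2) := by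
      rw [← Real.rpow_mul hB0, show (2*s-4)*((1:ℝ)/2) = s-2 by ring]
    rw [show 2*K*(q⁻¹)^2*(A^(5-2*s)*B^(2*s-4))
      = ((2*K)*((q⁻¹)^2)*(A^(5-2*s)))*(B^(2*s-4)) by ring]
    rw [Real.mul_rpow (mul_nonneg (mul_nonneg h2K0 hq20) hA5) hB2]
    rw [Real.mul_rpow (mul_nonneg h2K0 hq20) hA5]
    rw [Real.mul_rpow h2K0 hq20]
    rw [f1, f2, f3]
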